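/- H-inductive sentences persist in prime products: if φ is an h-inductive sentence and ∏_{x∈X} M_x / F is a prime product with M_x ⊨ φ for every x ∈ X, then ∏_{x∈X} M_x / F ⊨ φ. -/

import Mathlib

namespace PosLogic

open FirstOrder FirstOrder.Language FirstOrder.Language.Structure Set

universe u v w x y z

variable {L : FirstOrder.Language.{u, v}}

/-- Positive formulas: built from atomic formulas and `⊥` using `∧`, `∨` and `∃`. -/
inductive PosFormula (L : FirstOrder.Language.{u, v}) (α : Type y) : ℕ → Type (max u v y)
  | falsum {n : ℕ} : PosFormula L α n
  | equal {n : ℕ} (t₁ t₂ : L.Term (α ⊕ Fin n)) : PosFormula L α n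
  | rel {n l : ℕ} (R : L.Relations l) (ts : Fin l → L.Term (α ⊕ Fin n)) : PosFormula L α n
  | and {n : ℕ} (φ ψ : PosFormula L α n) : PosFormula L α n
  | or {n : ℕ} (φ ψ : PosFormula L α n) : PosFormula L α n
  | ex {n : ℕ} (φ : PosFormula L α (n + 1)) : PosFormula L α n

variable {α : Type y}

/-- Realization (satisfaction) of a positive formula. -/
def PosFormula.Realize {M : Type w} [L.Structure M] :
    ∀ {n : ℕ}, PosFormula L α n → (α → M) → (Fin n → M) → Prop
  | _, .falsum, _, _ => False
  | _, .equal t₁ t₂, v, xs => t₁.realize (Sum.elim v xs) = t₂.realize (Sum.elim v xs)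
  | _, .rel R ts, v, xs => RelMap R fun i => (ts i).realize (Sum.elim v xs)
  | _, .and φ ψ, v, xs => φ.Realize v xs ∧ ψ.Realize v xs
  | _, .or φ ψ, v, xs => φ.Realize v xs ∨ ψ.Realize v xs
  | _, .ex φ, v, xs => ∃ a, φ.Realize v (Fin.snoc xs a)

/-- Positive sentences. -/
abbrev PosSentence (L : FirstOrder.Language.{u, v}) : Type (max u v) := PosFormula L Empty 0

/-- A positive sentence holds in a structure. -/
def PosSentence.Realize (M : Type w) [L.Structure M] (φ : PosSentence L) : Prop :=
  PosFormula.Realize (M := M) φ Empty.elim (fun i => i.elim0)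

/-- Two structures are positively equivalent when they satisfy the same positive sentences. -/
def PosEquivalent (M : Type w) (N : Type x) [L.Structure M] [L.Structure N] : Prop :=
  ∀ φ : PosSentence L, PosSentence.Realize M φ ↔ PosSentence.Realize N φ

/-- A filter over a poset: a nonempty collection of upsets, upward closed among upsets and
closed under binary intersections. -/
structure PosetFilter (X : Type x) [Preorder X] where
  sets : Set (Set X)
  upper' : ∀ V ∈ sets, IsUpperSet V
  nonempty' : sets.Nonempty
  mono' : ∀ V ∈ sets, ∀ W : Set X, IsUpperSet W → V ⊆ W → W ∈ sets
  inter' : ∀ V ∈ sets, ∀ W ∈ sets, V ∩ W ∈ sets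

/-- A prime filter over a poset. -/
def PosetFilter.Prime {X : Type x} [Preorder X] (F : PosetFilter X) : Prop :=
  ∅ ∉ F.sets ∧ ∀ V W : Set X, IsUpperSet V → IsUpperSet W →
    V ∪ W ∈ F.sets → V ∈ F.sets ∨ W ∈ F.sets

/-- Predicate version: `S` is a filter over the poset `X`. -/
def IsPosetFilter {X : Type x} [Preorder X] (S : Set (Set X)) : Prop :=
  (∀ V ∈ S, IsUpperSet V) ∧ S.Nonempty ∧
    (∀ V ∈ S, ∀ W : Set X, IsUpperSet W → V ⊆ W → W ∈ S) ∧
    (∀ V ∈ S, ∀ W ∈ S, V ∩ W ∈ S)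

/-- Predicate version: `S` is a prime filter over the poset `X`. -/
def IsPrimePosetFilter {X : Type x} [Preorder X] (S : Set (Set X)) : Prop :=
  IsPosetFilter S ∧ ∅ ∉ S ∧ ∀ V W : Set X, IsUpperSet V → IsUpperSet W →
    V ∪ W ∈ S → V ∈ S ∨ W ∈ S

/-- A wellfounded forest: a poset whose principal downsets are well ordered. -/
def IsWellFoundedForest (X : Type x) [Preorder X] : Prop :=
  ∀ a : X, IsWellOrder (Set.Iic a) (· < ·)

/-- An ordered system of structures indexed by a poset. -/
structure OrderedSystem (L : FirstOrder.Language.{u, v}) (X : Type x) [Preorder X]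
    (M : X → Type w) [∀ a, L.Structure (M a)] where
  hom : ∀ ⦃a b : X⦄, a ≤ b → M a →[L] M b
  hom_id : ∀ (a : X) (m : M a), hom (le_refl a) m = m
  hom_comp : ∀ ⦃a b c : X⦄ (hab : a ≤ b) (hbc : b ≤ c) (m : M a),
    hom hbc (hom hab m) = hom (hab.trans hbc) m

variable {X : Type x} [PartialOrder X] {M : X → Type w} [∀ a, L.Structure (M a)]

/-- A compatible family in `S_F`: an element of `S_V` for some `V ∈ F`. -/
structure CompFam (D : OrderedSystem L X M) (F : PosetFilter X) where
  dom : Set X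
  dom_mem : dom ∈ F.sets
  val : ∀ a ∈ dom, M a
  compat : ∀ ⦃b c : X⦄ (hb : b ∈ dom) (hc : c ∈ dom) (hbc : b ≤ c),
    D.hom hbc (val b hb) = val c hc

variable {D : OrderedSystem L X M} {F : PosetFilter X}

/-- The set `⟦a = b⟧`. -/
def eqSet (a b : CompFam D F) : Set X :=
  {p | ∃ (ha : p ∈ a.dom) (hb : p ∈ b.dom), a.val p ha = b.val p hb}

theorem eqSet_upper (a b : CompFam D F) : IsUpperSet (eqSet a b) := by
  rintro p q hpq ⟨ha, hb, he⟩
  have hap := F.upper' _ a.dom_mem hpq ha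
  have hbp := F.upper' _ b.dom_mem hpq hb
  exact ⟨hap, hbp, by rw [← a.compat ha hap hpq, ← b.compat hb hbp hpq, he]⟩

/-- The relation `≡_F`. -/
instance CompFam.setoid (D : OrderedSystem L X M) (F : PosetFilter X) :
    Setoid (CompFam D F) where
  r a b := eqSet a b ∈ F.sets
  iseqv := by
    constructor
    · intro a
      exact F.mono' _ a.dom_mem _ (eqSet_upper a a) (fun p hp => ⟨hp, hp, rfl⟩)
    · intro a b h
      refine F.mono' _ h _ (eqSet_upper b a) ?_
      rintro p ⟨ha, hb, he⟩
      exact ⟨hb, ha, he.symm⟩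
    · intro a b c hab hbc
      refine F.mono' _ (F.inter' _ hab _ hbc) _ (eqSet_upper a c) ?_
      rintro p ⟨⟨ha, hb, h1⟩, hb', hc, h2⟩
      exact ⟨ha, hc, h1.trans h2⟩

theorem PosetFilter.univ_mem (F : PosetFilter X) : Set.univ ∈ F.sets := by
  obtain ⟨V, hV⟩ := F.nonempty'
  exact F.mono' _ hV _ isUpperSet_univ (Set.subset_univ V)

theorem PosetFilter.iInter_mem (F : PosetFilter X) :
    ∀ {n : ℕ} (s : Fin n → Set X), (∀ i, s i ∈ F.sets) → (⋂ i, s i) ∈ F.sets := by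
  intro n
  induction n with
  | zero =>
    intro s _
    rw [Set.iInter_of_empty]
    exact F.univ_mem
  | succ k ih =>
    intro s hs
    have he : (⋂ i, s i) = s 0 ∩ ⋂ i : Fin k, s i.succ := by
      ext p
      simp only [Set.mem_iInter, Set.mem_inter_iff, Fin.forall_fin_succ]
    rw [he]
    exact F.inter' _ (hs 0) _ (ih _ fun i => hs i.succ)

/-- Pointwise application of a function symbol to compatible families. -/
def CompFam.app {n : ℕ} (g : L.Functions n) (a : Fin n → CompFam D F) : CompFam D F where
  dom := ⋂ i, (a i).dom
  dom_mem := F.iInter_mem _ fun i => (a i).dom_mem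
  val p hp := funMap g fun i => (a i).val p (Set.mem_iInter.1 hp i)
  compat := by
    intro b c hb hc hbc
    rw [Hom.map_fun]
    congr 1
    funext i
    exact (a i).compat _ _ hbc

/-- The set `⟦R(a₁, …, aₙ)⟧`. -/
def relSet {n : ℕ} (R : L.Relations n) (a : Fin n → CompFam D F) : Set X :=
  {p | ∃ h : ∀ i, p ∈ (a i).dom, RelMap R fun i => (a i).val p (h i)}

/-- The set `⟦φ(a₁, …, aₙ)⟧` for a positive formula `φ`. -/
def posSet {n : ℕ} (φ : PosFormula L Empty n) (a : Fin n → CompFam D F) : Set X :=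
  {p | ∃ h : ∀ i, p ∈ (a i).dom,
    PosFormula.Realize φ Empty.elim fun i => (a i).val p (h i)}

/-- The filter product of an ordered system with respect to a filter over the index poset. -/
def FilterProd (D : OrderedSystem L X M) (F : PosetFilter X) : Type (max x w) :=
  Quotient (CompFam.setoid D F)

noncomputable instance FilterProd.structure : L.Structure (FilterProd D F) where
  funMap {n} g v :=
    Quotient.mk (CompFam.setoid D F) (CompFam.app g fun i => (v i).out)
  RelMap {n} R v :=
    ∃ a : Fin n → CompFam D F,
      (∀ i, Quotient.mk (CompFam.setoid D F) (a i) = v i) ∧ relSet R a ∈ F.sets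

/-- `(N, g)` is a direct limit (colimit) cocone of the ordered system `D`. -/
structure IsDirectLimitCocone {X : Type x} [Preorder X] {M : X → Type w}
    [∀ a, L.Structure (M a)] (D : OrderedSystem L X M)
    (N : Type z) [L.Structure N] (g : ∀ a, M a →[L] N) : Prop where
  compat : ∀ ⦃a b : X⦄ (hab : a ≤ b) (m : M a), g b (D.hom hab m) = g a m
  universal : ∀ (P : Type (max x w z)) [L.Structure P] (h : ∀ a, M a →[L] P),
    (∀ ⦃a b : X⦄ (hab : a ≤ b) (m : M a), h b (D.hom hab m) = h a m) →
    ∃! k : N →[L] P, ∀ (a : X) (m : M a), k (g a m) = h a m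

/-- A chain of structures: an ordered system indexed by a nonempty well ordered poset. -/
structure ChainSystem (L : FirstOrder.Language.{u, v}) where
  X : Type w
  [lo : LinearOrder X]
  [ne : Nonempty X]
  wf : WellFoundedLT X
  Mi : X → Type w
  [str : ∀ a, L.Structure (Mi a)]
  sys : OrderedSystem L X Mi

attribute [instance] ChainSystem.lo ChainSystem.ne ChainSystem.str

/-- An ordered system indexed by a wellfounded forest, together with a prime filter. -/
structure PrimeSystem (L : FirstOrder.Language.{u, v}) where
  X : Type w
  [po : PartialOrder X]
  forest : IsWellFoundedForest X
  Mi : X → Type w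
  [str : ∀ a, L.Structure (Mi a)]
  sys : OrderedSystem L X Mi
  F : PosetFilter X
  prime : F.Prime

attribute [instance] PrimeSystem.po PrimeSystem.str

/-- The ultrapower `M^ι/u`. -/
def Ultrapower (M : Type w) (ι : Type z) (u : Ultrafilter ι) :
    Type (max w z) :=
  (↑u : Filter ι).Product fun _ => M

noncomputable instance Ultrapower.structure (M : Type w) [L.Structure M] (ι : Type z)
    (u : Ultrafilter ι) : L.Structure (Ultrapower M ι u) :=
  inferInstanceAs (L.Structure ((↑u : Filter ι).Product fun _ => M))

/-- A prime power of the structure `N`: a prime product of an ordered system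
all of whose structures are `N`. -/
structure PrimePowerOf (L : FirstOrder.Language.{u, v}) (N : Type w) [L.Structure N] where
  X : Type x
  [po : PartialOrder X]
  forest : IsWellFoundedForest X
  sys : OrderedSystem L X fun _ => N
  F : PosetFilter X
  prime : F.Prime

attribute [instance] PrimePowerOf.po

/-- The carrier of a prime power. -/
def PrimePowerOf.carrier {N : Type w} [L.Structure N] (p : PrimePowerOf L N) :
    Type (max x w) :=
  FilterProd p.sys p.F

noncomputable instance {N : Type w} [L.Structure N] (p : PrimePowerOf L N) :
    L.Structure p.carrier :=
  inferInstanceAs (L.Structure (FilterProd p.sys p.F))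

/-- Basic h-inductive sentences: universal closures of implications between
positive formulas. -/
structure BasicHInd (L : FirstOrder.Language.{u, v}) : Type (max u v) where
  n : ℕ
  lhs : PosFormula L Empty n
  rhs : PosFormula L Empty n

/-- Satisfaction of a basic h-inductive sentence. -/
def BasicHInd.Realize (φ : BasicHInd L) (M : Type w) [L.Structure M] : Prop :=
  ∀ xs : Fin φ.n → M, φ.lhs.Realize Empty.elim xs → φ.rhs.Realize Empty.elim xs

/-- Satisfaction of an h-inductive theory (a set of h-inductive sentences). -/
def ModelsHInd (M : Type w) [L.Structure M] (T : Set (BasicHInd L)) : Prop :=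
  ∀ φ ∈ T, φ.Realize M

/-- An immersion: a map preserving and reflecting all positive formulas. -/
def IsImmersion {M : Type w} {N : Type x} [L.Structure M] [L.Structure N]
    (f : N → M) : Prop :=
  ∀ {n : ℕ} (φ : PosFormula L Empty n) (xs : Fin n → N),
    PosFormula.Realize φ Empty.elim xs ↔ PosFormula.Realize φ Empty.elim (f ∘ xs)

/-- A positively existentially closed model of an h-inductive theory `T`. -/
def IsPec (T : Set (BasicHInd L)) (M : Type w) [L.Structure M] : Prop :=
  ModelsHInd M T ∧ ∀ (P : Type w) [L.Structure P], ModelsHInd P T →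
    ∀ f : M →[L] P, IsImmersion (L := L) (⇑f : M → P)

/-- Positive `κ`-saturation. -/
def PositivelySaturatedAt (M : Type w) [L.Structure M] (κ : Cardinal.{w}) : Prop :=
  ∀ (γ : Type w) (vp : γ → M), Cardinal.mk γ < κ →
    ∀ (n : ℕ) (p : Set (PosFormula L γ n)),
      (∀ s : Finset (PosFormula L γ n), ↑s ⊆ p →
        ∃ xs : Fin n → M, ∀ φ ∈ s, PosFormula.Realize φ vp xs) →
      ∃ xs : Fin n → M, ∀ φ ∈ p, PosFormula.Realize φ vp xs

/-- Positive saturation: positive `|M|`-saturation. -/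
def PositivelySaturated (M : Type w) [L.Structure M] : Prop :=
  PositivelySaturatedAt (L := L) M (Cardinal.mk M)

/-! By the positive Łoś theorem, a positive formula holds in the prime product at `⟦ā⟧` iff
`⟦φ(ā)⟧ ∈ F`. If the premise of a basic h-inductive sentence holds in the product, its set is
in `F`; it is contained in the set of the conclusion, because every factor satisfies the
sentence, so the conclusion holds in the product too.

In the Łoś theorem primeness of `F` handles `⊥` and `∨`. The forest structure handles `∃`:
witnesses are chosen at the least point below `p` of the upset where the existential holds, and
transported upwards along the system; these least points are constant along upward paths, so the
transported witnesses form a compatible family. -/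

theorem PosFormula.realize_hom {N P : Type*} [L.Structure N] [L.Structure P] (g : N →[L] P) :
    ∀ {n : ℕ} (φ : PosFormula L α n) (v : α → N) (xs : Fin n → N),
      φ.Realize v xs → φ.Realize (g ∘ v) (g ∘ xs)
  | _, .falsum, _, _, h => h
  | _, .equal t₁ t₂, v, xs, h => by
    simp only [PosFormula.Realize, ← Sum.comp_elim, HomClass.realize_term] at *
    rw [h]
  | _, .rel R ts, v, xs, h => by
    simp only [PosFormula.Realize, ← Sum.comp_elim, HomClass.realize_term] at *
    exact g.map_rel R _ h
  | _, .and φ ψ, v, xs, h => ⟨φ.realize_hom g v xs h.1, ψ.realize_hom g v xs h.2⟩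
  | _, .or φ ψ, v, xs, h => h.imp (φ.realize_hom g v xs) (ψ.realize_hom g v xs)
  | _, .ex φ, v, xs, h => by
    obtain ⟨m, hm⟩ := h
    exact ⟨g m, by simpa only [Fin.comp_snoc] using φ.realize_hom g v _ hm⟩

theorem PosFormula.realize_hom_of_empty {N P : Type*} [L.Structure N] [L.Structure P]
    (g : N →[L] P) {n : ℕ} (φ : PosFormula L Empty n) {xs : Fin n → N}
    (h : φ.Realize Empty.elim xs) : φ.Realize Empty.elim (g ∘ xs) := by
  simpa only [Subsingleton.elim (g ∘ Empty.elim) Empty.elim] using φ.realize_hom g _ xs h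

theorem PosetFilter.inter_mem_iff {Y : Type*} [Preorder Y] (G : PosetFilter Y) {V W : Set Y}
    (hV : IsUpperSet V) (hW : IsUpperSet W) : V ∩ W ∈ G.sets ↔ V ∈ G.sets ∧ W ∈ G.sets :=
  ⟨fun h => ⟨G.mono' _ h _ hV inter_subset_left, G.mono' _ h _ hW inter_subset_right⟩,
    fun h => G.inter' _ h.1 _ h.2⟩

theorem PosetFilter.Prime.union_mem_iff {Y : Type*} [Preorder Y] {G : PosetFilter Y}
    (hG : G.Prime) {V W : Set Y} (hV : IsUpperSet V) (hW : IsUpperSet W) :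
    V ∪ W ∈ G.sets ↔ V ∈ G.sets ∨ W ∈ G.sets :=
  ⟨hG.2 V W hV hW, fun h => h.elim (fun h => G.mono' _ h _ (hV.union hW) subset_union_left)
    (fun h => G.mono' _ h _ (hV.union hW) subset_union_right)⟩

theorem IsWellFoundedForest.exists_least_le {Y : Type*} [PartialOrder Y]
    (hY : IsWellFoundedForest Y) {U : Set Y} {p : Y} (hp : p ∈ U) :
    ∃ q ∈ U, q ≤ p ∧ ∀ r ∈ U, r ≤ p → q ≤ r := by
  obtain ⟨⟨q, hqp⟩, hqU, hmin⟩ :=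
    (hY p).wf.has_min {r : Iic p | (r : Y) ∈ U} ⟨⟨p, le_rfl⟩, hp⟩
  refine ⟨q, hqU, hqp, fun r hrU hrp => ?_⟩
  by_contra hqr
  have hne : (⟨q, hqp⟩ : Iic p) ≠ ⟨r, hrp⟩ := fun h => hqr (congrArg Subtype.val h).le
  exact hne ((hY p).trichotomous _ _ (fun h => hqr h.le) (hmin ⟨r, hrp⟩ hrU))

namespace CompFam

theorem val_eq_hom_comp {n : ℕ} (a : Fin n → CompFam D F) {p q : X} (hpq : p ≤ q)
    (hp : ∀ i, p ∈ (a i).dom) (hq : ∀ i, q ∈ (a i).dom) :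
    (fun i => (a i).val q (hq i)) = D.hom hpq ∘ fun i => (a i).val p (hp i) :=
  funext fun i => ((a i).compat (hp i) (hq i) hpq).symm

theorem iInter_dom_mem {n : ℕ} (a : Fin n → CompFam D F) : (⋂ i, (a i).dom) ∈ F.sets :=
  F.iInter_mem _ fun i => (a i).dom_mem

theorem exists_glue (hX : IsWellFoundedForest X) {U : Set X} (hU : U ∈ F.sets)
    (w : ∀ q ∈ U, M q) :
    ∃ b : CompFam D F, b.dom = U ∧
      ∀ p (hp : p ∈ b.dom), ∃ q, ∃ hq : q ∈ U, ∃ hqp : q ≤ p, b.val p hp = D.hom hqp (w q hq) := by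
  choose ρ hρU hρle hρleast using fun p (hp : p ∈ U) => hX.exists_least_le hp
  have hρ_const : ∀ p q (hp : p ∈ U) (hpq : p ≤ q),
      ρ q (F.upper' _ hU hpq hp) = ρ p hp := by
    intro p q hp hpq
    have hq : q ∈ U := F.upper' _ hU hpq hp
    have hqp : ρ q hq ≤ ρ p hp := hρleast q _ _ (hρU p hp) ((hρle p hp).trans hpq)
    exact le_antisymm hqp (hρleast p hp _ (hρU q hq) (hqp.trans (hρle p hp)))
  -- `w (ρ q _)` and `w (ρ p _)` live in fibres that are only propositionally equal.
  have hom_congr : ∀ {q q' p : X} (e : q = q') (hq : q ∈ U) (hq' : q' ∈ U) (h : q ≤ p)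
      (h' : q' ≤ p), D.hom h (w q hq) = D.hom h' (w q' hq') := by
    intro q q' p e
    subst e
    intros
    rfl
  refine ⟨{ dom := U, dom_mem := hU, val := fun p hp => D.hom (hρle p hp) (w _ (hρU p hp))
            compat := fun p q hp hq hpq => ?_ }, rfl, fun p hp => ⟨_, _, _, rfl⟩⟩
  rw [D.hom_comp]
  exact hom_congr (hρ_const p q hp hpq).symm _ _ _ _

end CompFam

theorem relSet_upper {n : ℕ} (R : L.Relations n) (a : Fin n → CompFam D F) :
    IsUpperSet (relSet R a) := by
  rintro p q hpq ⟨hp, hR⟩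
  have hq : ∀ i, q ∈ (a i).dom := fun i => F.upper' _ (a i).dom_mem hpq (hp i)
  refine ⟨hq, ?_⟩
  rw [CompFam.val_eq_hom_comp a hpq hp hq]
  exact (D.hom hpq).map_rel R _ hR

theorem posSet_upper {n : ℕ} (φ : PosFormula L Empty n) (a : Fin n → CompFam D F) :
    IsUpperSet (posSet φ a) := by
  rintro p q hpq ⟨hp, hφ⟩
  have hq : ∀ i, q ∈ (a i).dom := fun i => F.upper' _ (a i).dom_mem hpq (hp i)
  refine ⟨hq, ?_⟩
  rw [CompFam.val_eq_hom_comp a hpq hp hq]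
  exact φ.realize_hom_of_empty (D.hom hpq) hφ

theorem posSet_falsum {n : ℕ} (a : Fin n → CompFam D F) : posSet .falsum a = ∅ :=
  eq_empty_of_forall_notMem fun _ ⟨_, h⟩ => h

theorem posSet_and {n : ℕ} (φ ψ : PosFormula L Empty n) (a : Fin n → CompFam D F) :
    posSet (.and φ ψ) a = posSet φ a ∩ posSet ψ a :=
  ext fun _ => ⟨fun ⟨h, hφ, hψ⟩ => ⟨⟨h, hφ⟩, h, hψ⟩, fun ⟨⟨h, hφ⟩, _, hψ⟩ => ⟨h, hφ, hψ⟩⟩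

theorem posSet_or {n : ℕ} (φ ψ : PosFormula L Empty n) (a : Fin n → CompFam D F) :
    posSet (.or φ ψ) a = posSet φ a ∪ posSet ψ a :=
  ext fun _ => exists_or

theorem val_snoc {n : ℕ} (a : Fin n → CompFam D F) (b : CompFam D F) {p : X}
    (h : ∀ i, p ∈ (Fin.snoc (α := fun _ => CompFam D F) a b i).dom) :
    (fun i => (Fin.snoc (α := fun _ => CompFam D F) a b i).val p (h i)) =
      Fin.snoc (fun i => (a i).val p (by simpa using h i.castSucc))
        (b.val p (by simpa using h (Fin.last n))) := by
  funext i
  refine Fin.lastCases ?_ (fun j => ?_) i <;> simp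

theorem mem_posSet_snoc_iff {n : ℕ} (φ : PosFormula L Empty (n + 1)) (a : Fin n → CompFam D F)
    (b : CompFam D F) {p : X} :
    p ∈ posSet φ (Fin.snoc (α := fun _ => CompFam D F) a b) ↔
      ∃ (ha : ∀ i, p ∈ (a i).dom) (hb : p ∈ b.dom),
        φ.Realize Empty.elim (Fin.snoc (fun i => (a i).val p (ha i)) (b.val p hb)) := by
  constructor
  · rintro ⟨h, hφ⟩
    rw [val_snoc] at hφ
    exact ⟨_, _, hφ⟩
  · rintro ⟨ha, hb, hφ⟩
    have h : ∀ i, p ∈ (Fin.snoc (α := fun _ => CompFam D F) a b i).dom :=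
      Fin.lastCases (by simpa using hb) (fun j => by simpa using ha j)
    exact ⟨h, by rwa [val_snoc]⟩

theorem posSet_snoc_subset {n : ℕ} (φ : PosFormula L Empty (n + 1)) (a : Fin n → CompFam D F)
    (b : CompFam D F) : posSet φ (Fin.snoc (α := fun _ => CompFam D F) a b) ⊆ posSet (.ex φ) a :=
  fun _ hp => by
    obtain ⟨ha, hb, hφ⟩ := (mem_posSet_snoc_iff φ a b).1 hp
    exact ⟨ha, _, hφ⟩

theorem exists_posSet_snoc_mem (hX : IsWellFoundedForest X) {n : ℕ}
    {φ : PosFormula L Empty (n + 1)} {a : Fin n → CompFam D F} (hex : posSet (.ex φ) a ∈ F.sets) :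
    ∃ b, posSet φ (Fin.snoc (α := fun _ => CompFam D F) a b) ∈ F.sets := by
  have hwit : ∀ q ∈ posSet (.ex φ) a, ∃ m : M q, ∃ ha : ∀ i, q ∈ (a i).dom,
      φ.Realize Empty.elim (Fin.snoc (fun i => (a i).val q (ha i)) m) :=
    fun _ ⟨ha, m, hφ⟩ => ⟨m, ha, hφ⟩
  choose w hwa hw using hwit
  obtain ⟨b, hdom, hb⟩ := CompFam.exists_glue (D := D) hX hex w
  refine ⟨b, F.mono' _ hex _ (posSet_upper _ _) fun p hp => ?_⟩
  obtain ⟨q, hq, hqp, hbp⟩ := hb p (hdom ▸ hp)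
  have ha : ∀ i, p ∈ (a i).dom := fun i => F.upper' _ (a i).dom_mem hqp (hwa q hq i)
  refine (mem_posSet_snoc_iff φ a b).2 ⟨ha, hdom ▸ hp, ?_⟩
  rw [hbp, CompFam.val_eq_hom_comp a hqp (hwa q hq) ha, ← Fin.comp_snoc]
  exact φ.realize_hom_of_empty (D.hom hqp) (hw q hq)

namespace FilterProd

/-- The bare `⟦a⟧` lives in `Quotient`, which carries no `L`-structure instance. -/
abbrev mk (a : CompFam D F) : FilterProd D F := ⟦a⟧

theorem mk_eq_mk_iff {a b : CompFam D F} : mk a = mk b ↔ eqSet a b ∈ F.sets :=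
  Quotient.eq

theorem mk_eq_mk_of_subset {a b : CompFam D F} {V : Set X} (hV : V ∈ F.sets)
    (h : V ⊆ eqSet a b) : mk a = mk b :=
  mk_eq_mk_iff.2 (F.mono' _ hV _ (eqSet_upper a b) h)

theorem funMap_mk {n : ℕ} (g : L.Functions n) (a : Fin n → CompFam D F) :
    funMap g (fun i => mk (a i)) = mk (CompFam.app g a) := by
  refine mk_eq_mk_of_subset (F.iInter_mem _ fun i => mk_eq_mk_iff.1 (Quotient.out_eq (mk (a i))))
    fun p hp => ?_
  have hp := mem_iInter.1 hp
  refine ⟨mem_iInter.2 fun i => (hp i).1, mem_iInter.2 fun i => (hp i).2.1, ?_⟩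
  exact congrArg (funMap g) (funext fun i => (hp i).2.2)

theorem relMap_mk_iff {n : ℕ} (R : L.Relations n) (a : Fin n → CompFam D F) :
    RelMap R (fun i => mk (a i)) ↔ relSet R a ∈ F.sets := by
  refine ⟨fun ⟨a', ha', hR⟩ => ?_, fun h => ⟨a, fun _ => rfl, h⟩⟩
  refine F.mono' _ (F.inter' _ hR _ (F.iInter_mem _ fun i => mk_eq_mk_iff.1 (ha' i))) _
    (relSet_upper R a) ?_
  rintro p ⟨⟨h', hR'⟩, heq⟩
  have heq := mem_iInter.1 heq
  refine ⟨fun i => (heq i).2.1, ?_⟩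
  convert hR' using 1
  exact funext fun i => (heq i).2.2.symm

end FilterProd

def termFam {n : ℕ} (t : L.Term (Empty ⊕ Fin n)) (a : Fin n → CompFam D F) : CompFam D F where
  dom := ⋂ i, (a i).dom
  dom_mem := CompFam.iInter_dom_mem a
  val p hp := t.realize (Sum.elim Empty.elim fun i => (a i).val p (mem_iInter.1 hp i))
  compat b c hb hc hbc := by
    rw [← HomClass.realize_term]
    congr 1
    funext s
    rcases s with e | i
    · exact e.elim
    · exact (a i).compat _ _ hbc

theorem realize_term_mk {n : ℕ} (t : L.Term (Empty ⊕ Fin n)) (a : Fin n → CompFam D F) :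
    t.realize (Sum.elim Empty.elim fun i => FilterProd.mk (a i)) = FilterProd.mk (termFam t a) := by
  induction t with
  | var s =>
    rcases s with e | i
    · exact e.elim
    · exact FilterProd.mk_eq_mk_of_subset (CompFam.iInter_dom_mem a)
        fun p hp => ⟨mem_iInter.1 hp i, hp, rfl⟩
  | func g ts ih =>
    refine (congrArg (funMap g) (funext ih)).trans ((FilterProd.funMap_mk g _).trans ?_)
    exact FilterProd.mk_eq_mk_of_subset (CompFam.iInter_dom_mem a)
      fun p hp => ⟨mem_iInter.2 fun _ => hp, hp, rfl⟩

theorem eqSet_termFam {n : ℕ} (t₁ t₂ : L.Term (Empty ⊕ Fin n)) (a : Fin n → CompFam D F) :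
    eqSet (termFam t₁ a) (termFam t₂ a) = posSet (.equal t₁ t₂) a :=
  ext fun _ => ⟨fun ⟨h, _, he⟩ => ⟨mem_iInter.1 h, he⟩, fun ⟨h, he⟩ =>
    ⟨mem_iInter.2 h, mem_iInter.2 h, he⟩⟩

/-- The factor `⋂ i, (a i).dom` matters only for nullary `R`. -/
theorem relSet_termFam_inter {n l : ℕ} (R : L.Relations l)
    (ts : Fin l → L.Term (Empty ⊕ Fin n)) (a : Fin n → CompFam D F) :
    relSet R (fun i => termFam (ts i) a) ∩ ⋂ i, (a i).dom = posSet (.rel R ts) a :=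
  ext fun _ => ⟨fun ⟨⟨_, hR⟩, h⟩ => ⟨mem_iInter.1 h, hR⟩, fun ⟨h, hR⟩ =>
    ⟨⟨fun _ => mem_iInter.2 h, hR⟩, mem_iInter.2 h⟩⟩

theorem realize_mk_iff (hX : IsWellFoundedForest X) (hF : F.Prime) {n : ℕ}
    (φ : PosFormula L Empty n) (a : Fin n → CompFam D F) :
    φ.Realize Empty.elim (fun i => FilterProd.mk (a i)) ↔ posSet φ a ∈ F.sets := by
  induction φ with
  | falsum => exact iff_of_false id fun h => hF.1 (posSet_falsum a ▸ h)
  | equal t₁ t₂ =>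
    change t₁.realize _ = t₂.realize _ ↔ _
    rw [realize_term_mk, realize_term_mk, FilterProd.mk_eq_mk_iff, eqSet_termFam]
  | rel R ts =>
    change RelMap R (fun i => (ts i).realize _) ↔ _
    simp only [realize_term_mk, FilterProd.relMap_mk_iff]
    rw [← relSet_termFam_inter, F.inter_mem_iff (relSet_upper _ _)
      (F.upper' _ (CompFam.iInter_dom_mem a)), and_iff_left (CompFam.iInter_dom_mem a)]
  | and φ ψ ihφ ihψ =>
    rw [posSet_and, F.inter_mem_iff (posSet_upper _ _) (posSet_upper _ _), ← ihφ, ← ihψ]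
    rfl
  | or φ ψ ihφ ihψ =>
    rw [posSet_or, hF.union_mem_iff (posSet_upper _ _) (posSet_upper _ _), ← ihφ, ← ihψ]
    rfl
  | ex φ ih =>
    change (∃ y, φ.Realize _ (Fin.snoc _ y)) ↔ _
    have mk_snoc (b : CompFam D F) :
        (fun i => FilterProd.mk (Fin.snoc (α := fun _ => CompFam D F) a b i)) =
          Fin.snoc (fun i => FilterProd.mk (a i)) (FilterProd.mk b) :=
      Fin.comp_snoc FilterProd.mk a b
    refine Quotient.exists.trans ⟨fun ⟨b, hb⟩ => ?_, fun h => ?_⟩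
    · refine F.mono' _ ((ih (Fin.snoc a b)).1 ?_) _ (posSet_upper _ _) (posSet_snoc_subset φ a b)
      rwa [mk_snoc]
    · obtain ⟨b, hb⟩ := exists_posSet_snoc_mem hX h
      exact ⟨b, mk_snoc b ▸ (ih (Fin.snoc a b)).2 hb⟩

/-- H-inductive sentences persist in prime products. -/
theorem stmt11 (hX : IsWellFoundedForest X) (D : OrderedSystem L X M) (F : PosetFilter X)
    (hF : F.Prime) (φs : List (BasicHInd L))
    (h : ∀ p : X, ∀ ψ ∈ φs, BasicHInd.Realize ψ (M p)) :
    ∀ ψ ∈ φs, BasicHInd.Realize ψ (FilterProd D F) := by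
  intro ψ hψ xs hlhs
  obtain ⟨a, rfl⟩ : ∃ a : Fin ψ.n → CompFam D F, (fun i => FilterProd.mk (a i)) = xs :=
    ⟨fun i => (xs i).out, funext fun i => Quotient.out_eq (xs i)⟩
  rw [realize_mk_iff hX hF] at hlhs ⊢
  exact F.mono' _ hlhs _ (posSet_upper _ _) fun p ⟨hp, hφ⟩ => ⟨hp, h p ψ hψ _ hφ⟩

end PosLogic
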